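/- arXiv:0807.4068 — 4 statements merged into one kernel-verified Lean document; each statement's English description precedes it below -/
import Mathlib

section
/- Let G be a connected graph on a countably infinite vertex set in which every vertex has degree exactly v (v ≥ 2). Then μ₀(G) ≤ v·h(G), where h(G) is the Cheeger constant of G and μ₀(G) is the bottom of the spectrum of the combinatorial Laplacian of G. -/
open Classical

/-- The combinatorial Dirichlet energy of `f` on the graph `G`:
the sum over edges `{i,j}` of `(f i - f j)^2`, written as half the sum over
ordered adjacent pairs. -/
noncomputable def edgeEnergy {V : Type} (G : SimpleGraph V) (f : V → ℝ) : ℝ :=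
  (1 / 2) * ∑' p : V × V, if G.Adj p.1 p.2 then (f p.1 - f p.2) ^ 2 else 0

/-- The squared `ℓ²`-norm of a function on the vertices. -/
noncomputable def vertexNormSq {V : Type} (f : V → ℝ) : ℝ := ∑' i : V, f i ^ 2

/-- The (inner vertex-)boundary of a set `F` of vertices: the vertices of `F`
adjacent to at least one vertex outside `F`. -/
def innerBoundary {V : Type} (G : SimpleGraph V) (F : Set V) : Set V :=
  {x ∈ F | ∃ y ∉ F, G.Adj x y}

/-- The Cheeger constant of `G`: the infimum over nonempty finite vertex sets `F`
of `#∂F / #F`. -/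
noncomputable def cheegerConst {V : Type} (G : SimpleGraph V) : ℝ :=
  sInf {r : ℝ | ∃ F : Finset V, F.Nonempty ∧
    r = (innerBoundary G (F : Set V)).ncard / F.card}

/-- The bottom of the spectrum of the combinatorial Laplacian on `G`:
the infimum of the Rayleigh quotients of finitely supported nonzero functions. -/
noncomputable def mu0 {V : Type} (G : SimpleGraph V) : ℝ :=
  sInf {r : ℝ | ∃ f : V → ℝ, (Function.support f).Finite ∧ f ≠ 0 ∧
    r = edgeEnergy G f / vertexNormSq f}

/-!
Test the Rayleigh quotient on the indicator function `1_F` of a finite set `F`. Its squared norm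
is `#F`, and its energy is the number of edges leaving `F` (each appears in both orientations among
the ordered pairs, which cancels the factor `1/2`). Every such edge starts at a vertex of `∂F` and
each vertex has at most `v` neighbours, so the energy is at most `v · #∂F`; now take the infimum
over `F`.
-/

open Set

lemma tsum_indicator_one {β : Type*} (s : Set β) :
    ∑' x, s.indicator (1 : β → ℝ) x = s.ncard := by
  rw [← tsum_subtype, Pi.one_def, tsum_const, Nat.card_coe_set_eq, nsmul_one]

section

variable {V : Type} (G : SimpleGraph V)

lemma mu0_le_rayleigh {f : V → ℝ} (hf : (Function.support f).Finite) (hf0 : f ≠ 0) :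
    mu0 G ≤ edgeEnergy G f / vertexNormSq f := by
  refine csInf_le ⟨0, ?_⟩ ⟨f, hf, hf0, rfl⟩
  rintro _ ⟨g, -, -, rfl⟩
  have hE : 0 ≤ edgeEnergy G g :=
    mul_nonneg (by norm_num) (tsum_nonneg fun p => by split_ifs <;> positivity)
  exact div_nonneg hE (tsum_nonneg fun i => sq_nonneg (g i))

def edgeBoundary (F : Set V) : Set (V × V) := {p | p.1 ∈ F ∧ p.2 ∉ F ∧ G.Adj p.1 p.2}

lemma vertexNormSq_indicator_one (F : Set V) : vertexNormSq (F.indicator 1) = F.ncard := by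
  rw [vertexNormSq, ← tsum_indicator_one]
  congr 1 with x
  by_cases hx : x ∈ F <;> simp [hx]

lemma edgeEnergy_indicator_one {F : Set V} (hE : (edgeBoundary G F).Finite) :
    edgeEnergy G (F.indicator 1) = (edgeBoundary G F).ncard := by
  set E := edgeBoundary G F
  have hsplit : ∀ p : V × V,
      (if G.Adj p.1 p.2 then (F.indicator 1 p.1 - F.indicator 1 p.2) ^ 2 else 0) =
        E.indicator (1 : V × V → ℝ) p + E.indicator 1 p.swap := by
    rintro ⟨x, y⟩
    by_cases hx : x ∈ F <;> by_cases hy : y ∈ F <;> by_cases hxy : G.Adj x y <;>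
      simp [E, edgeBoundary, hx, hy, hxy, G.adj_comm y x]
  have hsum : Summable (E.indicator (1 : V × V → ℝ)) :=
    (summable_subtype_iff_indicator).mp (hE.summable 1)
  have hsum_swap : Summable fun p : V × V => E.indicator (1 : V × V → ℝ) p.swap :=
    (Equiv.prodComm V V).summable_iff.mpr hsum
  have hswap : ∑' p : V × V, E.indicator (1 : V × V → ℝ) p.swap = E.ncard :=
    ((Equiv.prodComm V V).tsum_eq _).trans (tsum_indicator_one E)
  rw [edgeEnergy, tsum_congr hsplit, hsum.tsum_add hsum_swap, hswap, tsum_indicator_one]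
  ring

lemma edgeBoundary_subset_biUnion (F : Set V) :
    edgeBoundary G F ⊆ ⋃ x ∈ innerBoundary G F, {x} ×ˢ G.neighborSet x := by
  rintro ⟨x, y⟩ ⟨hx, hy, hxy⟩
  simp only [mem_iUnion, mem_prod, mem_singleton_iff, SimpleGraph.mem_neighborSet]
  exact ⟨x, ⟨hx, y, hy, hxy⟩, rfl, hxy⟩

variable {G}

lemma innerBoundary_subset (F : Set V) : innerBoundary G F ⊆ F := fun _ hx => hx.1

lemma finite_biUnion_singleton_prod_neighborSet (hfin : ∀ x, (G.neighborSet x).Finite)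
    {s : Set V} (hs : s.Finite) : (⋃ x ∈ s, {x} ×ˢ G.neighborSet x).Finite :=
  hs.biUnion fun x _ => (finite_singleton x).prod (hfin x)

lemma edgeBoundary_finite (hfin : ∀ x, (G.neighborSet x).Finite) {F : Set V} (hF : F.Finite) :
    (edgeBoundary G F).Finite :=
  (finite_biUnion_singleton_prod_neighborSet hfin (hF.subset (innerBoundary_subset F))).subset
    (edgeBoundary_subset_biUnion G F)

lemma ncard_edgeBoundary_le {v : ℕ} (hfin : ∀ x, (G.neighborSet x).Finite)
    (hdeg : ∀ x, (G.neighborSet x).ncard ≤ v) {F : Set V} (hF : F.Finite) :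
    (edgeBoundary G F).ncard ≤ v * (innerBoundary G F).ncard := by
  have hB : (innerBoundary G F).Finite := hF.subset (innerBoundary_subset F)
  calc (edgeBoundary G F).ncard
      ≤ (⋃ x ∈ innerBoundary G F, {x} ×ˢ G.neighborSet x).ncard :=
        ncard_le_ncard (edgeBoundary_subset_biUnion G F)
          (finite_biUnion_singleton_prod_neighborSet hfin hB)
    _ ≤ ∑ x ∈ hB.toFinset, ({x} ×ˢ G.neighborSet x).ncard := by
        simpa using hB.toFinset.set_ncard_biUnion_le fun x => {x} ×ˢ G.neighborSet x
    _ ≤ ∑ x ∈ hB.toFinset, v := Finset.sum_le_sum fun x _ => by simpa [ncard_prod] using hdeg x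
    _ = v * (innerBoundary G F).ncard := by simp [ncard_eq_toFinset_card _ hB, mul_comm]

lemma mu0_le_mul_ncard_innerBoundary_div {v : ℕ} (hfin : ∀ x, (G.neighborSet x).Finite)
    (hdeg : ∀ x, (G.neighborSet x).ncard ≤ v) {F : Set V} (hF : F.Finite) (hF0 : F.Nonempty) :
    mu0 G ≤ v * ((innerBoundary G F).ncard / F.ncard) := by
  obtain ⟨x, hx⟩ := hF0
  have hind0 : F.indicator (1 : V → ℝ) ≠ 0 := fun h => by simpa [hx] using congrFun h x
  have hray := mu0_le_rayleigh G (hF.subset (support_indicator_subset)) hind0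
  rw [edgeEnergy_indicator_one G (edgeBoundary_finite hfin hF), vertexNormSq_indicator_one] at hray
  calc mu0 G ≤ (edgeBoundary G F).ncard / F.ncard := hray
    _ ≤ (v * (innerBoundary G F).ncard : ℕ) / F.ncard := by
        gcongr; exact ncard_edgeBoundary_le hfin hdeg hF
    _ = v * ((innerBoundary G F).ncard / F.ncard) := by push_cast; ring

lemma mu0_le_mul_cheegerConst [Nonempty V] {v : ℕ} (hfin : ∀ x, (G.neighborSet x).Finite)
    (hdeg : ∀ x, (G.neighborSet x).ncard ≤ v) :
    mu0 G ≤ v * cheegerConst G := by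
  obtain ⟨x⟩ := ‹Nonempty V›
  rw [cheegerConst, ← smul_eq_mul, ← Real.sInf_smul_of_nonneg (Nat.cast_nonneg v)]
  refine le_csInf ⟨_, _, ⟨{x}, Finset.singleton_nonempty x, rfl⟩, rfl⟩ ?_
  rintro _ ⟨_, ⟨F, hF, rfl⟩, rfl⟩
  simpa using mu0_le_mul_ncard_innerBoundary_div hfin hdeg F.finite_toSet (by simpa using hF)

end

theorem mu0_le_degree_mul_cheeger_general (V : Type) [Infinite V]
    (G : SimpleGraph V) (v : ℕ) (hv : 2 ≤ v)
    (hdeg : ∀ x : V, (G.neighborSet x).ncard = v) :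
    mu0 G ≤ v * cheegerConst G :=
  mu0_le_mul_cheegerConst (fun x => finite_of_ncard_pos (by have := hdeg x; omega))
    (fun x => (hdeg x).le)

theorem mu0_le_degree_mul_cheeger (V : Type) [Countable V] [Infinite V]
    (G : SimpleGraph V) (hconn : G.Connected) (v : ℕ) (hv : 2 ≤ v)
    (hdeg : ∀ x : V, (G.neighborSet x).ncard = v) :
    mu0 G ≤ v * cheegerConst G :=
  mu0_le_degree_mul_cheeger_general V G v hv hdeg
end

section
/- Let G be a connected graph on a countably infinite vertex set in which every vertex has degree exactly v (v ≥ 2). Then h(G)² ≤ 2v·μ₀(G), where h(G) is the Cheeger constant of G and μ₀(G) is the bottom of the spectrum of the combinatorial Laplacian of G. -/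
open Classical

/-!
For a finitely supported `f`, the co-area argument applied to `g = f²` gives
`h · ∑ f² ≤ ½ ∑_{x ~ y} |f x² - f y²|`: peeling `g` level by level, each superlevel set `F` has
at least `h · #F` boundary vertices, and each of them starts an edge leaving `F`.
Writing `|a² - b²| = |a - b| |a + b|`, Cauchy–Schwarz and `∑_{x ~ y} (f x + f y)² ≤ 4 v ∑ f²`
bound the right-hand side by `√(v ∑ f² · 2 E(f))`, whence `h² ∑ f² ≤ 2 v E(f)`.
Sums over `x ~ y` run over ordered adjacent pairs, i.e. each edge twice.
-/

open Finset

section PairSums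

variable {α : Type*}

theorem sum_comp_swap_of_swap_mem {β : Type*} [AddCommMonoid β] {E : Finset (α × α)}
    (hE : ∀ p ∈ E, p.swap ∈ E) (φ : α × α → β) :
    ∑ p ∈ E, φ p.swap = ∑ p ∈ E, φ p :=
  sum_nbij' Prod.swap Prod.swap hE hE (fun _ _ => rfl) (fun _ _ => rfl) (fun _ _ => rfl)

theorem sum_abs_sub_eq_two_mul_sum_posPart {E : Finset (α × α)} (hE : ∀ p ∈ E, p.swap ∈ E)
    (g : α → ℝ) : ∑ p ∈ E, |g p.1 - g p.2| = 2 * ∑ p ∈ E, (g p.1 - g p.2)⁺ := by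
  have hneg : ∑ p ∈ E, (g p.1 - g p.2)⁻ = ∑ p ∈ E, (g p.1 - g p.2)⁺ := by
    simpa [← posPart_neg] using sum_comp_swap_of_swap_mem hE fun p => (g p.1 - g p.2)⁺
  simp_rw [← posPart_add_negPart]
  rw [sum_add_distrib, hneg, two_mul]

theorem sq_sum_abs_sq_sub_sq_le {E : Finset (α × α)} (hE : ∀ p ∈ E, p.swap ∈ E) (f : α → ℝ) :
    (∑ p ∈ E, |f p.1 ^ 2 - f p.2 ^ 2|) ^ 2 ≤
      4 * (∑ p ∈ E, f p.1 ^ 2) * ∑ p ∈ E, (f p.1 - f p.2) ^ 2 := by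
  have hplus : ∑ p ∈ E, (f p.1 + f p.2) ^ 2 ≤ 4 * ∑ p ∈ E, f p.1 ^ 2 := by
    have hswap := sum_comp_swap_of_swap_mem hE fun p => f p.1 ^ 2
    calc ∑ p ∈ E, (f p.1 + f p.2) ^ 2 ≤ ∑ p ∈ E, (2 * f p.1 ^ 2 + 2 * f p.2 ^ 2) :=
          sum_le_sum fun p _ => by nlinarith [sq_nonneg (f p.1 - f p.2)]
      _ = 4 * ∑ p ∈ E, f p.1 ^ 2 := by
          rw [sum_add_distrib, ← mul_sum, ← mul_sum]
          simp only [Prod.fst_swap] at hswap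
          rw [hswap]; ring
  calc (∑ p ∈ E, |f p.1 ^ 2 - f p.2 ^ 2|) ^ 2
      = (∑ p ∈ E, |f p.1 - f p.2| * |f p.1 + f p.2|) ^ 2 := by
        refine congrArg (· ^ 2) (sum_congr rfl fun p _ => ?_)
        rw [← abs_mul, sq_sub_sq, mul_comm]
    _ ≤ (∑ p ∈ E, |f p.1 - f p.2| ^ 2) * ∑ p ∈ E, |f p.1 + f p.2| ^ 2 :=
        sum_mul_sq_le_sq_mul_sq _ _ _
    _ ≤ (∑ p ∈ E, (f p.1 - f p.2) ^ 2) * (4 * ∑ p ∈ E, f p.1 ^ 2) := by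
        simp_rw [sq_abs]
        exact mul_le_mul_of_nonneg_left hplus (sum_nonneg fun _ _ => sq_nonneg _)
    _ = _ := by ring

theorem coarea_le (E : Finset (α × α)) (S : Finset α) (c : ℝ)
    (hc : ∀ F ⊆ S, F.Nonempty → c * #F ≤ #{p ∈ E | p.1 ∈ F ∧ p.2 ∉ F})
    {g : α → ℝ} (hg : 0 ≤ g) (hgS : ∀ x ∉ S, g x = 0) :
    c * ∑ x ∈ S, g x ≤ ∑ p ∈ E, (g p.1 - g p.2)⁺ := by
  induction hn : #{x ∈ S | g x ≠ 0} using Nat.strong_induction_on generalizing g with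
  | _ n ih =>
  set F := {x ∈ S | g x ≠ 0}
  have hgF : ∀ x ∉ F, g x = 0 := fun x hx => by
    by_contra h
    exact hx (mem_filter.2 ⟨by_contra fun hxS => h (hgS x hxS), h⟩)
  rcases F.eq_empty_or_nonempty with hFe | hFne
  · rw [sum_eq_zero fun x _ => hgF x (by simp [hFe]), mul_zero]
    exact sum_nonneg fun _ _ => posPart_nonneg _
  obtain ⟨x₀, hx₀, hmin⟩ := F.exists_min_image g hFne
  set m := g x₀
  -- Peel off the bottom layer: `g = g' + m • 1_F`, and `g'` has a smaller support.
  set g' : α → ℝ := fun x => if x ∈ F then g x - m else 0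
  have hg'nonneg : 0 ≤ g' := fun x => by
    by_cases hx : x ∈ F <;> simp [g', hx, hmin x]
  have hg'S : ∀ x ∉ S, g' x = 0 := fun x hx => if_neg fun hxF => hx (filter_subset _ _ hxF)
  have hcard : #{x ∈ S | g' x ≠ 0} < n := by
    refine hn ▸ card_lt_card ((ssubset_iff_of_subset ?_).2 ⟨x₀, hx₀, by simp [g', m]⟩)
    intro x hx
    by_contra hxF
    exact (mem_filter.1 hx).2 (if_neg hxF)
  have hsum : ∑ x ∈ S, g x = ∑ x ∈ S, g' x + #F * m := by
    have hpt : ∀ x, g x = g' x + if x ∈ F then m else 0 := fun x => by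
      by_cases hx : x ∈ F <;> simp [g', hx, hgF]
    have hind : ∑ x ∈ S, (if x ∈ F then m else 0) = #F * m := by
      rw [sum_ite_mem, inter_eq_right.2 (filter_subset _ _), sum_const, nsmul_eq_mul]
    rw [sum_congr rfl fun x _ => hpt x, sum_add_distrib, hind]
  have hedge : ∑ p ∈ E, (g p.1 - g p.2)⁺ =
      ∑ p ∈ E, (g' p.1 - g' p.2)⁺ + #{p ∈ E | p.1 ∈ F ∧ p.2 ∉ F} * m := by
    have hpt : ∀ p : α × α, (g p.1 - g p.2)⁺ =
        (g' p.1 - g' p.2)⁺ + if p.1 ∈ F ∧ p.2 ∉ F then m else 0 := fun p => by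
      by_cases h₁ : p.1 ∈ F <;> by_cases h₂ : p.2 ∈ F <;> simp [g', h₁, h₂, hgF]
      · rw [posPart_eq_self.2 (hg _), posPart_eq_self.2 (sub_nonneg.2 (hmin _ h₁)), sub_add_cancel]
      · rw [negPart_eq_zero.2 (hg _), posPart_eq_zero.2 (sub_nonpos.2 (hmin _ h₂))]
    rw [sum_congr rfl fun p _ => hpt p, sum_add_distrib, ← sum_filter, sum_const, nsmul_eq_mul]
  calc c * ∑ x ∈ S, g x = c * ∑ x ∈ S, g' x + c * #F * m := by rw [hsum]; ring
    _ ≤ ∑ p ∈ E, (g' p.1 - g' p.2)⁺ + #{p ∈ E | p.1 ∈ F ∧ p.2 ∉ F} * m :=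
      add_le_add (ih _ hcard hg'nonneg hg'S rfl)
        (mul_le_mul_of_nonneg_right (hc F (filter_subset _ _) hFne) (hg x₀))
    _ = ∑ p ∈ E, (g p.1 - g p.2)⁺ := hedge.symm

end PairSums

section Graph

variable {V : Type}

theorem vertexNormSq_eq_sum {S : Finset V} {f : V → ℝ} (hf : ∀ x ∉ S, f x = 0) :
    vertexNormSq f = ∑ x ∈ S, f x ^ 2 :=
  tsum_eq_sum fun x hx => by rw [hf x hx, sq, mul_zero]

theorem vertexNormSq_pos {f : V → ℝ} (hf : f.support.Finite) (hf₀ : f ≠ 0) :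
    0 < vertexNormSq f := by
  obtain ⟨x, hx⟩ := Function.ne_iff.1 hf₀
  exact (summable_of_hasFiniteSupport (hf.subset fun x hx => by simp_all)).tsum_pos
    (fun x => sq_nonneg (f x)) x (sq_pos_of_ne_zero hx)

variable (G : SimpleGraph V)

theorem cheegerConst_nonneg : 0 ≤ cheegerConst G :=
  Real.sInf_nonneg (by rintro _ ⟨F, -, rfl⟩; positivity)

theorem cheegerConst_mul_card_le {F : Finset V} (hF : F.Nonempty) :
    cheegerConst G * #F ≤ (innerBoundary G F).ncard := by
  rw [← le_div_iff₀ (by exact_mod_cast hF.card_pos)]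
  exact csInf_le ⟨0, by rintro _ ⟨F, -, rfl⟩; positivity⟩ ⟨F, hF, rfl⟩

theorem ncard_innerBoundary_le {F : Finset V} {E : Finset (V × V)}
    (hE : ∀ x ∈ F, ∀ y, G.Adj x y → (x, y) ∈ E) :
    (innerBoundary G F).ncard ≤ #{p ∈ E | p.1 ∈ F ∧ p.2 ∉ F} := by
  calc (innerBoundary G F).ncard
      ≤ ((({p ∈ E | p.1 ∈ F ∧ p.2 ∉ F}.image Prod.fst : Finset V)) : Set V).ncard := by
        refine Set.ncard_le_ncard ?_ (finite_toSet _)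
        rintro x ⟨hx, y, hy, hxy⟩
        exact mem_image.2 ⟨(x, y), mem_filter.2 ⟨hE x hx y hxy, hx, hy⟩, rfl⟩
    _ ≤ #{p ∈ E | p.1 ∈ F ∧ p.2 ∉ F} := by
        rw [Set.ncard_coe_finset]
        exact card_image_le

noncomputable def adjPairs (T : Finset V) : Finset (V × V) := {p ∈ T ×ˢ T | G.Adj p.1 p.2}

theorem swap_mem_adjPairs {T : Finset V} {p : V × V} (hp : p ∈ adjPairs G T) :
    p.swap ∈ adjPairs G T := by
  simp only [adjPairs, mem_filter, mem_product] at hp ⊢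
  exact ⟨hp.1.symm, hp.2.symm⟩

theorem sum_adjPairs_sq_fst_le [G.LocallyFinite] {v : ℕ} (hdeg : ∀ x, G.degree x ≤ v)
    (T : Finset V) (f : V → ℝ) :
    ∑ p ∈ adjPairs G T, f p.1 ^ 2 ≤ v * ∑ x ∈ T, f x ^ 2 := by
  rw [adjPairs, sum_filter, sum_product, mul_sum]
  refine sum_le_sum fun x _ => ?_
  dsimp only
  rw [← sum_filter, sum_const, nsmul_eq_mul]
  refine mul_le_mul_of_nonneg_right ?_ (sq_nonneg _)
  calc (#{y ∈ T | G.Adj x y} : ℝ) ≤ G.degree x := by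
        rw [← G.card_neighborFinset_eq_degree]
        exact_mod_cast card_le_card fun y hy => (G.mem_neighborFinset x y).2 (mem_filter.1 hy).2
    _ ≤ v := by exact_mod_cast hdeg x

variable [G.LocallyFinite]

noncomputable def closedNbhd (S : Finset V) : Finset V :=
  S ∪ S.biUnion fun x => G.neighborFinset x

theorem mk_mem_adjPairs_closedNbhd {S : Finset V} {x y : V} (hxy : G.Adj x y)
    (hS : x ∈ S ∨ y ∈ S) : (x, y) ∈ adjPairs G (closedNbhd G S) := by
  have hnbr : ∀ {a b}, a ∈ S → G.Adj a b → b ∈ closedNbhd G S := fun ha hab =>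
    mem_union_right _ (mem_biUnion.2 ⟨_, ha, (G.mem_neighborFinset _ _).2 hab⟩)
  refine mem_filter.2 ⟨mem_product.2 ?_, hxy⟩
  rcases hS with hx | hy
  · exact ⟨mem_union_left _ hx, hnbr hx hxy⟩
  · exact ⟨hnbr hy hxy.symm, mem_union_left _ hy⟩

theorem edgeEnergy_eq_sum {S : Finset V} {f : V → ℝ} (hf : ∀ x ∉ S, f x = 0) :
    edgeEnergy G f = 1 / 2 * ∑ p ∈ adjPairs G (closedNbhd G S), (f p.1 - f p.2) ^ 2 := by
  rw [edgeEnergy, tsum_eq_sum (s := adjPairs G (closedNbhd G S))]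
  · exact congrArg _ (sum_congr rfl fun p hp => if_pos (mem_filter.1 hp).2)
  · intro p hp
    split_ifs with hadj
    · have hzero : ∀ {x}, f x ≠ 0 → x ∈ S := fun hx => by_contra fun hS => hx (hf _ hS)
      have h₁ : f p.1 = 0 :=
        by_contra fun h => hp (mk_mem_adjPairs_closedNbhd G hadj (.inl (hzero h)))
      have h₂ : f p.2 = 0 :=
        by_contra fun h => hp (mk_mem_adjPairs_closedNbhd G hadj (.inr (hzero h)))
      rw [h₁, h₂, sub_zero, sq, mul_zero]
    · rfl

theorem cheegerConst_mul_sum_le {S : Finset V} {g : V → ℝ} (hg : 0 ≤ g)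
    (hgS : ∀ x ∉ S, g x = 0) :
    cheegerConst G * ∑ x ∈ S, g x ≤ (∑ p ∈ adjPairs G (closedNbhd G S), |g p.1 - g p.2|) / 2 := by
  rw [sum_abs_sub_eq_two_mul_sum_posPart (fun _ => swap_mem_adjPairs G),
    mul_div_cancel_left₀ _ two_ne_zero]
  refine coarea_le _ S _ (fun F hFS hF => ?_) hg hgS
  refine (cheegerConst_mul_card_le G hF).trans ?_
  exact_mod_cast ncard_innerBoundary_le G fun x hx y hxy =>
    mk_mem_adjPairs_closedNbhd G hxy (.inl (hFS hx))

theorem cheegerConst_sq_mul_vertexNormSq_le {v : ℕ} (hdeg : ∀ x, G.degree x ≤ v) {f : V → ℝ}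
    (hf : f.support.Finite) : cheegerConst G ^ 2 * vertexNormSq f ≤ 2 * v * edgeEnergy G f := by
  set S := hf.toFinset
  have hfS : ∀ x ∉ S, f x = 0 := fun x hx => by simpa [S] using hx
  rw [vertexNormSq_eq_sum hfS, edgeEnergy_eq_sum G hfS]
  set E := adjPairs G (closedNbhd G S)
  have hE : ∀ p ∈ E, p.swap ∈ E := fun _ => swap_mem_adjPairs G
  set A := ∑ x ∈ S, f x ^ 2
  set D := ∑ p ∈ E, (f p.1 - f p.2) ^ 2
  have hA : 0 ≤ A := sum_nonneg fun _ _ => sq_nonneg _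
  have hD : 0 ≤ D := sum_nonneg fun _ _ => sq_nonneg _
  have hcoarea : cheegerConst G * A ≤ (∑ p ∈ E, |f p.1 ^ 2 - f p.2 ^ 2|) / 2 :=
    cheegerConst_mul_sum_le G (g := fun x => f x ^ 2) (fun _ => sq_nonneg _)
      fun x hx => by simp [hfS x hx]
  have hfst : ∑ p ∈ E, f p.1 ^ 2 ≤ v * A := by
    refine (sum_adjPairs_sq_fst_le G hdeg _ f).trans_eq ?_
    have hS : S ⊆ closedNbhd G S := subset_union_left
    rw [← sum_subset hS fun x _ hx => by rw [hfS x hx, sq, mul_zero]]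
  have hsq : (cheegerConst G * A) ^ 2 ≤ v * A * D := by
    calc (cheegerConst G * A) ^ 2 ≤ ((∑ p ∈ E, |f p.1 ^ 2 - f p.2 ^ 2|) / 2) ^ 2 :=
          pow_le_pow_left₀ (mul_nonneg (cheegerConst_nonneg G) hA) hcoarea 2
      _ ≤ v * A * D := by
          linarith [sq_sum_abs_sq_sub_sq_le hE f,
            mul_le_mul_of_nonneg_right hfst hD]
  rcases hA.eq_or_lt with hA0 | hApos
  · rw [← hA0, mul_zero]
    positivity
  · nlinarith

end Graph

theorem cheeger_sq_le_two_degree_mul_mu0_general (V : Type)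
    (G : SimpleGraph V) (hconn : G.Connected) (v : ℕ) (hv : 2 ≤ v)
    (hdeg : ∀ x : V, (G.neighborSet x).ncard = v) :
    cheegerConst G ^ 2 ≤ 2 * v * mu0 G := by
  have : G.LocallyFinite := fun x => (Set.finite_of_ncard_pos (by rw [hdeg x]; omega)).fintype
  have hdeg' : ∀ x, G.degree x ≤ v := fun x => by
    rw [← G.card_neighborSet_eq_degree, ← Nat.card_eq_fintype_card, Nat.card_coe_set_eq, hdeg]
  obtain ⟨x₀⟩ := hconn.nonempty
  have hv₀ : (0 : ℝ) < 2 * v := by positivity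
  rw [← div_le_iff₀' hv₀]
  refine le_csInf ⟨_, Pi.single x₀ 1, (Set.finite_singleton x₀).subset (Pi.support_single_subset),
    by simp, rfl⟩ ?_
  rintro _ ⟨f, hf, hf₀, rfl⟩
  rw [le_div_iff₀ (vertexNormSq_pos hf hf₀), div_mul_eq_mul_div, div_le_iff₀' hv₀]
  exact cheegerConst_sq_mul_vertexNormSq_le G hdeg' hf

theorem cheeger_sq_le_two_degree_mul_mu0 (V : Type) [Countable V] [Infinite V]
    (G : SimpleGraph V) (hconn : G.Connected) (v : ℕ) (hv : 2 ≤ v)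
    (hdeg : ∀ x : V, (G.neighborSet x).ncard = v) :
    cheegerConst G ^ 2 ≤ 2 * v * mu0 G :=
  cheeger_sq_le_two_degree_mul_mu0_general V G hconn v hv hdeg
end

section
/- Let R > 0 and let P, Q be real numbers. Define F₀(r) = P − (P − Q)·arcsin(tanh r)/arcsin(tanh R). Then F₀(0) = P, F₀(R) = Q, F₀ satisfies F₀''(r) + tanh(r)·F₀'(r) = 0 for every real r, and ∫₀^R F₀'(r)² cosh(r) dr = (P − Q)²·(2·arctan(e^R) − π/2)/arcsin(tanh R)². -/
/-!
The interpolant is affine in the Gudermannian function `gd r = arcsin (tanh r)`, whose derivative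
is `1 / cosh r`. Hence `F₀' = c / cosh` with `c = (Q - P) / gd R`, and `(c / cosh)' = -tanh · c / cosh`
is the radial harmonic equation. The energy density is `F₀'² cosh = c² / cosh`, and `1 / cosh` is
also the derivative of `2 arctan (exp r)`, which evaluates the integral.
-/

open Real

noncomputable def gudermannian (x : ℝ) : ℝ := arcsin (tanh x)

lemma Real.hasDerivAt_tanh (x : ℝ) : HasDerivAt tanh (cosh x ^ 2)⁻¹ x := by
  have hcosh := (cosh_pos x).ne'
  have hquot := (hasDerivAt_sinh x).div (hasDerivAt_cosh x) hcosh
  refine (hquot.congr_deriv ?_).congr_of_eventuallyEq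
    (Filter.Eventually.of_forall tanh_eq_sinh_div_cosh)
  rw [← sq, ← sq, cosh_sq_sub_sinh_sq, one_div]

lemma Real.one_sub_tanh_sq (x : ℝ) : 1 - tanh x ^ 2 = (cosh x ^ 2)⁻¹ := by
  have hcosh := (cosh_pos x).ne'
  rw [tanh_eq_sinh_div_cosh]
  field_simp
  linarith [cosh_sq x]

lemma hasDerivAt_gudermannian (x : ℝ) : HasDerivAt gudermannian (cosh x)⁻¹ x := by
  have h := (hasDerivAt_arcsin (neg_one_lt_tanh x).ne' (tanh_lt_one x).ne).comp x
    (hasDerivAt_tanh x)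
  refine h.congr_deriv ?_
  rw [one_sub_tanh_sq, sqrt_inv, sqrt_sq (cosh_pos x).le, one_div, inv_inv]
  field_simp [(cosh_pos x).ne']

lemma gudermannian_pos {x : ℝ} (hx : 0 < x) : 0 < gudermannian x := by
  rw [gudermannian, arcsin_pos, tanh_eq_sinh_div_cosh]
  exact div_pos (sinh_pos_iff.mpr hx) (cosh_pos x)

lemma hasDerivAt_two_mul_arctan_exp (x : ℝ) :
    HasDerivAt (fun r => 2 * arctan (exp r)) (cosh x)⁻¹ x := by
  refine (((hasDerivAt_arctan (exp x)).comp x (hasDerivAt_exp x)).const_mul 2).congr_deriv ?_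
  rw [cosh_eq, exp_neg]
  field_simp
  ring

lemma integral_inv_cosh (a b : ℝ) :
    ∫ r in a..b, (cosh r)⁻¹ = 2 * arctan (exp b) - 2 * arctan (exp a) :=
  intervalIntegral.integral_eq_sub_of_hasDerivAt (fun x _ => hasDerivAt_two_mul_arctan_exp x)
    ((continuous_cosh.inv₀ fun x => (cosh_pos x).ne').intervalIntegrable a b)

section AffineGudermannian

variable (p c : ℝ)

lemma deriv_const_add_mul_gudermannian :
    deriv (fun r => p + c * gudermannian r) = fun r => c / cosh r :=
  funext fun r => ((hasDerivAt_gudermannian r).const_mul c).const_add p |>.deriv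

lemma deriv_div_cosh (r : ℝ) : deriv (fun r => c / cosh r) r = -(tanh r * (c / cosh r)) := by
  have hcosh := (cosh_pos r).ne'
  have h : HasDerivAt (fun r => c / cosh r) _ r :=
    (hasDerivAt_const r c).div (hasDerivAt_cosh r) hcosh
  rw [h.deriv, tanh_eq_sinh_div_cosh]
  field_simp
  ring

lemma const_add_mul_gudermannian_radial_harmonic (r : ℝ) :
    deriv (deriv fun r => p + c * gudermannian r) r +
      tanh r * deriv (fun r => p + c * gudermannian r) r = 0 := by
  rw [deriv_const_add_mul_gudermannian, deriv_div_cosh]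
  ring

lemma integral_sq_deriv_const_add_mul_gudermannian_mul_cosh (a b : ℝ) :
    ∫ r in a..b, deriv (fun r => p + c * gudermannian r) r ^ 2 * cosh r
      = c ^ 2 * (2 * arctan (exp b) - 2 * arctan (exp a)) := by
  have hdensity : ∀ r, (c / cosh r) ^ 2 * cosh r = c ^ 2 * (cosh r)⁻¹ := fun r => by
    field_simp [(cosh_pos r).ne']
  simp only [deriv_const_add_mul_gudermannian, hdensity, intervalIntegral.integral_const_mul,
    integral_inv_cosh]

end AffineGudermannian

/-- The harmonic interpolant `F₀(r) = P - (P - Q) · arcsin (tanh r) / arcsin (tanh R)`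
in Fermi coordinates: it takes the values `P` at `0` and `Q` at `R`, satisfies the
radial harmonic equation `F₀'' + tanh · F₀' = 0`, and its weighted radial Dirichlet
energy equals `(P - Q)² (2 arctan (e^R) - π/2) / arcsin (tanh R)²`. -/
theorem harmonic_interpolant_energy (R P Q : ℝ) (hR : 0 < R) :
    let F₀ : ℝ → ℝ := fun r =>
      P - (P - Q) * Real.arcsin (Real.tanh r) / Real.arcsin (Real.tanh R)
    F₀ 0 = P ∧ F₀ R = Q ∧
    (∀ r : ℝ, deriv (deriv F₀) r + Real.tanh r * deriv F₀ r = 0) ∧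
    (∫ r in (0:ℝ)..R, (deriv F₀ r) ^ 2 * Real.cosh r)
      = (P - Q) ^ 2 * (2 * Real.arctan (Real.exp R) - Real.pi / 2)
          / (Real.arcsin (Real.tanh R)) ^ 2 := by
  intro F₀
  have hA := (gudermannian_pos hR).ne'
  have hF₀ : F₀ = fun r => P + (Q - P) / gudermannian R * gudermannian r := by
    funext r
    simp only [F₀, gudermannian]
    ring
  refine ⟨by simp [F₀], ?_, ?_, ?_⟩
  · rw [hF₀]
    field_simp
    ring
  · rw [hF₀]
    exact const_add_mul_gudermannian_radial_harmonic _ _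
  · rw [hF₀, integral_sq_deriv_const_add_mul_gudermannian_mul_cosh, exp_zero, arctan_one]
    simp only [gudermannian] at hA ⊢
    field_simp
    ring
end

section
/- For every m > 0 and every λ > 0 there exists a constant A > 0 with the following property. For all functions u : [0, m] × ℝ → ℝ and w : [−m, 0] × ℝ → ℝ that are continuously differentiable and 2π-periodic in the second variable, one has ∫₀^m ∫₀^{2π} (∂u/∂r)(r, θ)² cosh(r) dθ dr + ∫_{−m}^0 ∫₀^{2π} (∂w/∂r)(r, θ)² cosh(r) dθ dr + λ·(∫₀^m ∫₀^{2π} u(r, θ)² cosh(r) dθ dr + ∫_{−m}^0 ∫₀^{2π} w(r, θ)² cosh(r) dθ dr) ≥ A·(∫₀^{2π} (u(0, θ) − w(0, θ)) dθ)². -/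
/-!
On an interval `[a, b]`, Cauchy–Schwarz bounds the oscillation of a `C¹` function by
`(f y - f x)² ≤ (b - a) ∫ f'²`; averaging `f x² ≤ 2 f r² + 2 (f x - f r)²` over `r` gives the trace
inequality `(b - a) f x² ≤ 2 ∫ f² + 2 (b - a)² ∫ f'²`, and the weight `cosh ≥ 1` only enlarges the
right-hand side. Applied to every slice `θ` and integrated in `θ` (Fubini on the compact
rectangle), it bounds `m ∫ u(0, θ)² dθ` and `m ∫ w(0, θ)² dθ` by the localized energies, while
Cauchy–Schwarz in `θ` bounds the squared jump `(∫ (u - w)(0, θ) dθ)²` by `4π` times their sum.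
-/
open intervalIntegral Set
open MeasureTheory (volume IntegrableOn Measure)

theorem sq_intervalIntegral_le {f : ℝ → ℝ} {a b : ℝ} (hab : a ≤ b)
    (hf : IntervalIntegrable f volume a b)
    (hf2 : IntervalIntegrable (fun x => f x ^ 2) volume a b) :
    (∫ x in a..b, f x) ^ 2 ≤ (b - a) * ∫ x in a..b, f x ^ 2 := by
  set I := ∫ x in a..b, f x
  set S := ∫ x in a..b, f x ^ 2
  -- `(b - a)²` times the variance of `f` about its mean `I / (b - a)`
  have hvar : ∫ x in a..b, ((b - a) * f x - I) ^ 2 = (b - a) * ((b - a) * S - I ^ 2) := by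
    have hexp : ∀ x, ((b - a) * f x - I) ^ 2 =
        (b - a) ^ 2 * f x ^ 2 - 2 * (b - a) * I * f x + I ^ 2 := fun x => by ring
    simp_rw [hexp]
    rw [integral_add ((hf2.const_mul _).sub (hf.const_mul _)) intervalIntegrable_const,
      integral_sub (hf2.const_mul _) (hf.const_mul _), integral_const_mul, integral_const_mul,
      integral_const, smul_eq_mul]
    ring
  have hnonneg : 0 ≤ (b - a) * ((b - a) * S - I ^ 2) :=
    hvar ▸ integral_nonneg hab fun x _ => sq_nonneg _
  rcases hab.eq_or_lt with rfl | hlt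
  · simp [I]
  · linarith [nonneg_of_mul_nonneg_right hnonneg (sub_pos.2 hlt)]

section Trace

variable {f f' : ℝ → ℝ} {a b : ℝ}

theorem sq_sub_le_of_hasDerivAt (hd : ∀ r ∈ Icc a b, HasDerivAt f (f' r) r)
    (hc : ContinuousOn f' (Icc a b)) {x y : ℝ} (hx : x ∈ Icc a b) (hy : y ∈ Icc a b) :
    (f y - f x) ^ 2 ≤ (b - a) * ∫ r in a..b, f' r ^ 2 := by
  wlog hxy : x ≤ y generalizing x y
  · rw [← neg_sub, neg_sq]
    exact this hy hx (le_of_not_ge hxy)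
  have hsub : uIcc x y ⊆ Icc a b := by
    rw [uIcc_of_le hxy]; exact Icc_subset_Icc hx.1 hy.2
  have hftc : ∫ r in x..y, f' r = f y - f x :=
    integral_eq_sub_of_hasDerivAt (fun r hr => hd r (hsub hr)) (hc.mono hsub).intervalIntegrable
  have hmono : ∫ r in x..y, f' r ^ 2 ≤ ∫ r in a..b, f' r ^ 2 :=
    integral_mono_interval hx.1 hxy hy.2 (Filter.Eventually.of_forall fun r => sq_nonneg _)
      ((hc.pow 2).intervalIntegrable_of_Icc (hx.1.trans (hxy.trans hy.2)))
  calc (f y - f x) ^ 2 = (∫ r in x..y, f' r) ^ 2 := by rw [hftc]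
    _ ≤ (y - x) * ∫ r in x..y, f' r ^ 2 :=
      sq_intervalIntegral_le hxy (hc.mono hsub).intervalIntegrable
        ((hc.pow 2).mono hsub).intervalIntegrable
    _ ≤ (b - a) * ∫ r in a..b, f' r ^ 2 :=
      mul_le_mul (by linarith [hx.1, hy.2]) hmono (integral_nonneg hxy fun r _ => sq_nonneg _)
        (by linarith [hx.1, hy.2])

theorem mul_sq_le_of_hasDerivAt (hd : ∀ r ∈ Icc a b, HasDerivAt f (f' r) r)
    (hc : ContinuousOn f' (Icc a b)) {x : ℝ} (hx : x ∈ Icc a b) :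
    (b - a) * f x ^ 2 ≤ 2 * (∫ r in a..b, f r ^ 2) + 2 * (b - a) ^ 2 * ∫ r in a..b, f' r ^ 2 := by
  have hab : a ≤ b := hx.1.trans hx.2
  have hf : ContinuousOn f (Icc a b) := fun r hr => (hd r hr).continuousAt.continuousWithinAt
  set E := ∫ r in a..b, f' r ^ 2
  have hpt : ∀ r ∈ Icc a b, f x ^ 2 ≤ 2 * f r ^ 2 + 2 * ((b - a) * E) := fun r hr => by
    nlinarith [sq_sub_le_of_hasDerivAt hd hc hr hx, sq_nonneg (f x - 2 * f r)]
  have hf2 : IntervalIntegrable (fun r => f r ^ 2) volume a b :=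
    (hf.pow 2).intervalIntegrable_of_Icc hab
  have hint := integral_mono_on hab intervalIntegrable_const
    ((hf2.const_mul 2).add intervalIntegrable_const) hpt
  rw [integral_const, integral_add (hf2.const_mul 2) intervalIntegrable_const, integral_const_mul,
    integral_const, smul_eq_mul, smul_eq_mul] at hint
  linear_combination hint

theorem intervalIntegral_le_intervalIntegral_mul_of_one_le {h ρ : ℝ → ℝ} (hab : a ≤ b)
    (hh : ContinuousOn h (Icc a b)) (hρ : ContinuousOn ρ (Icc a b))
    (h0 : ∀ r ∈ Icc a b, 0 ≤ h r) (hρ1 : ∀ r ∈ Icc a b, 1 ≤ ρ r) :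
    ∫ r in a..b, h r ≤ ∫ r in a..b, h r * ρ r :=
  integral_mono_on hab (hh.intervalIntegrable_of_Icc hab)
    ((hh.mul hρ).intervalIntegrable_of_Icc hab)
    fun r hr => le_mul_of_one_le_right (h0 r hr) (hρ1 r hr)

theorem mul_sq_le_of_hasDerivAt_of_one_le {ρ : ℝ → ℝ}
    (hd : ∀ r ∈ Icc a b, HasDerivAt f (f' r) r) (hc : ContinuousOn f' (Icc a b))
    (hρ : ContinuousOn ρ (Icc a b)) (hρ1 : ∀ r ∈ Icc a b, 1 ≤ ρ r) {x : ℝ} (hx : x ∈ Icc a b) :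
    (b - a) * f x ^ 2 ≤
      2 * (∫ r in a..b, f r ^ 2 * ρ r) + 2 * (b - a) ^ 2 * ∫ r in a..b, f' r ^ 2 * ρ r := by
  have hab : a ≤ b := hx.1.trans hx.2
  have hf : ContinuousOn f (Icc a b) := fun r hr => (hd r hr).continuousAt.continuousWithinAt
  refine (mul_sq_le_of_hasDerivAt hd hc hx).trans ?_
  gcongr 2 * ?_ + 2 * (b - a) ^ 2 * ?_
  · exact intervalIntegral_le_intervalIntegral_mul_of_one_le hab (hf.pow 2) hρ
      (fun r _ => sq_nonneg _) hρ1
  · exact intervalIntegral_le_intervalIntegral_mul_of_one_le hab (hc.pow 2) hρ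
      (fun r _ => sq_nonneg _) hρ1

end Trace

section Rectangle

variable {F : ℝ → ℝ → ℝ} {a b c d : ℝ}

theorem ContinuousOn.integrableOn_uIoc_prod
    (hF : ContinuousOn (Function.uncurry F) (uIcc a b ×ˢ uIcc c d)) :
    IntegrableOn (Function.uncurry F) (uIoc a b ×ˢ uIoc c d) :=
  (hF.integrableOn_compact (isCompact_uIcc.prod isCompact_uIcc)).mono_set
    (prod_mono uIoc_subset_uIcc uIoc_subset_uIcc)

theorem ContinuousOn.intervalIntegral_swap
    (hF : ContinuousOn (Function.uncurry F) (uIcc a b ×ˢ uIcc c d)) :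
    ∫ x in a..b, ∫ y in c..d, F x y = ∫ y in c..d, ∫ x in a..b, F x y :=
  MeasureTheory.intervalIntegral_intervalIntegral_swap hF.integrableOn_uIoc_prod

theorem ContinuousOn.intervalIntegrable_intervalIntegral
    (hF : ContinuousOn (Function.uncurry F) (uIcc a b ×ˢ uIcc c d)) :
    IntervalIntegrable (fun y => ∫ x in a..b, F x y) volume c d := by
  have h := hF.integrableOn_uIoc_prod
  rw [IntegrableOn, Measure.volume_eq_prod, ← Measure.prod_restrict] at h
  rw [intervalIntegrable_iff]
  simp_rw [intervalIntegral_eq_integral_uIoc]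
  exact h.integral_prod_right.smul (if a ≤ b then (1 : ℝ) else -1)

end Rectangle

theorem mul_intervalIntegral_sq_le_of_hasDerivAt {g g' : ℝ → ℝ → ℝ} {ρ : ℝ → ℝ} {a b c d x : ℝ}
    (hcd : c ≤ d) (hg : ContinuousOn (Function.uncurry g) (Icc a b ×ˢ Icc c d))
    (hd : ∀ θ ∈ Icc c d, ∀ r ∈ Icc a b, HasDerivAt (g · θ) (g' r θ) r)
    (hg' : ContinuousOn (Function.uncurry g') (Icc a b ×ˢ Icc c d))
    (hρ : ContinuousOn ρ (Icc a b)) (hρ1 : ∀ r ∈ Icc a b, 1 ≤ ρ r) (hx : x ∈ Icc a b) :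
    (b - a) * ∫ θ in c..d, g x θ ^ 2 ≤
      2 * (∫ r in a..b, ∫ θ in c..d, g r θ ^ 2 * ρ r) +
        2 * (b - a) ^ 2 * ∫ r in a..b, ∫ θ in c..d, g' r θ ^ 2 * ρ r := by
  have hab : a ≤ b := hx.1.trans hx.2
  have hweighted : ∀ G : ℝ → ℝ → ℝ, ContinuousOn (Function.uncurry G) (Icc a b ×ˢ Icc c d) →
      ContinuousOn (Function.uncurry fun r θ => G r θ ^ 2 * ρ r) (uIcc a b ×ˢ uIcc c d) :=
    fun G hG => by
      rw [uIcc_of_le hab, uIcc_of_le hcd]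
      exact (hG.pow 2).mul (hρ.comp continuousOn_fst fun p hp => hp.1)
  have hI := (hweighted g hg).intervalIntegrable_intervalIntegral
  have hE := (hweighted g' hg').intervalIntegrable_intervalIntegral
  have htrace : ContinuousOn (fun θ => g x θ ^ 2) (Icc c d) :=
    (hg.comp (continuousOn_const.prodMk continuousOn_id) fun θ hθ => ⟨hx, hθ⟩).pow 2
  have hslice : ∀ θ ∈ Icc c d, (b - a) * g x θ ^ 2 ≤
      2 * (∫ r in a..b, g r θ ^ 2 * ρ r) + 2 * (b - a) ^ 2 * ∫ r in a..b, g' r θ ^ 2 * ρ r :=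
    fun θ hθ => mul_sq_le_of_hasDerivAt_of_one_le (hd θ hθ)
      (hg'.comp (continuousOn_id.prodMk continuousOn_const) fun r hr => ⟨hr, hθ⟩) hρ hρ1 hx
  calc (b - a) * ∫ θ in c..d, g x θ ^ 2 = ∫ θ in c..d, (b - a) * g x θ ^ 2 :=
        (integral_const_mul _ _).symm
    _ ≤ ∫ θ in c..d, (2 * (∫ r in a..b, g r θ ^ 2 * ρ r) +
          2 * (b - a) ^ 2 * ∫ r in a..b, g' r θ ^ 2 * ρ r) :=
        integral_mono_on hcd ((htrace.intervalIntegrable_of_Icc hcd).const_mul _)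
          ((hI.const_mul _).add (hE.const_mul _)) hslice
    _ = _ := by
        rw [integral_add (hI.const_mul _) (hE.const_mul _), integral_const_mul, integral_const_mul,
          (hweighted g hg).intervalIntegral_swap, (hweighted g' hg').intervalIntegral_swap]

theorem sq_intervalIntegral_sub_le {p q : ℝ → ℝ} {c d : ℝ} (hcd : c ≤ d)
    (hp : ContinuousOn p (Icc c d)) (hq : ContinuousOn q (Icc c d)) :
    (∫ θ in c..d, (p θ - q θ)) ^ 2 ≤
      2 * (d - c) * ((∫ θ in c..d, p θ ^ 2) + ∫ θ in c..d, q θ ^ 2) := by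
  have hp2 : IntervalIntegrable (fun θ => p θ ^ 2) volume c d :=
    (hp.pow 2).intervalIntegrable_of_Icc hcd
  have hq2 : IntervalIntegrable (fun θ => q θ ^ 2) volume c d :=
    (hq.pow 2).intervalIntegrable_of_Icc hcd
  calc (∫ θ in c..d, (p θ - q θ)) ^ 2 ≤ (d - c) * ∫ θ in c..d, (p θ - q θ) ^ 2 :=
        sq_intervalIntegral_le hcd ((hp.sub hq).intervalIntegrable_of_Icc hcd)
          (((hp.sub hq).pow 2).intervalIntegrable_of_Icc hcd)
    _ ≤ (d - c) * ∫ θ in c..d, (2 * p θ ^ 2 + 2 * q θ ^ 2) := by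
        gcongr
        exact integral_mono_on hcd (((hp.sub hq).pow 2).intervalIntegrable_of_Icc hcd)
          ((hp2.const_mul 2).add (hq2.const_mul 2))
          fun θ _ => by nlinarith [sq_nonneg (p θ + q θ)]
    _ = _ := by
        rw [integral_add (hp2.const_mul 2) (hq2.const_mul 2), integral_const_mul,
          integral_const_mul]
        ring

/-- Collar estimate in Fermi coordinates: for every `m > 0` and `λ > 0` there is
`A > 0` such that for all continuously differentiable functions `u` on
`[0,m] × ℝ` and `w` on `[-m,0] × ℝ`, `2π`-periodic in the second variable,
the localized energies dominate `A` times the square of the jump of the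
`θ`-integrals across the central geodesic `r = 0`. -/
theorem collar_estimate (m lam : ℝ) (hm : 0 < m) (hlam : 0 < lam) :
    ∃ A > (0:ℝ), ∀ u u' w w' : ℝ → ℝ → ℝ,
      ContDiffOn ℝ 1 (fun p : ℝ × ℝ => u p.1 p.2)
        (Set.Icc 0 m ×ˢ (Set.univ : Set ℝ)) →
      ContDiffOn ℝ 1 (fun p : ℝ × ℝ => w p.1 p.2)
        (Set.Icc (-m) 0 ×ˢ (Set.univ : Set ℝ)) →
      (∀ θ : ℝ, ∀ r ∈ Set.Icc (0:ℝ) m, HasDerivAt (fun s => u s θ) (u' r θ) r) →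
      (∀ θ : ℝ, ∀ r ∈ Set.Icc (-m) (0:ℝ), HasDerivAt (fun s => w s θ) (w' r θ) r) →
      ContinuousOn (fun p : ℝ × ℝ => u' p.1 p.2)
        (Set.Icc 0 m ×ˢ (Set.univ : Set ℝ)) →
      ContinuousOn (fun p : ℝ × ℝ => w' p.1 p.2)
        (Set.Icc (-m) 0 ×ˢ (Set.univ : Set ℝ)) →
      (∀ r θ : ℝ, u r (θ + 2 * Real.pi) = u r θ) →
      (∀ r θ : ℝ, w r (θ + 2 * Real.pi) = w r θ) →
      A * (∫ θ in (0:ℝ)..(2 * Real.pi), (u 0 θ - w 0 θ)) ^ 2 ≤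
        (∫ r in (0:ℝ)..m,
            ∫ θ in (0:ℝ)..(2 * Real.pi), (u' r θ) ^ 2 * Real.cosh r) +
        (∫ r in (-m)..(0:ℝ),
            ∫ θ in (0:ℝ)..(2 * Real.pi), (w' r θ) ^ 2 * Real.cosh r) +
        lam *
          ((∫ r in (0:ℝ)..m,
              ∫ θ in (0:ℝ)..(2 * Real.pi), (u r θ) ^ 2 * Real.cosh r) +
           (∫ r in (-m)..(0:ℝ),
              ∫ θ in (0:ℝ)..(2 * Real.pi), (w r θ) ^ 2 * Real.cosh r)) := by
  refine ⟨m * lam / (8 * Real.pi * (m ^ 2 * lam + 1)), by positivity, ?_⟩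
  intro u u' w w' hu hw hdu hdw hu' hw' _ _
  have h2π : 0 ≤ 2 * Real.pi := by positivity
  have hrect {G : ℝ → ℝ → ℝ} {s : Set ℝ}
      (hG : ContinuousOn (fun p : ℝ × ℝ => G p.1 p.2) (s ×ˢ univ)) :
      ContinuousOn (Function.uncurry G) (s ×ˢ Icc 0 (2 * Real.pi)) :=
    hG.mono (prod_mono subset_rfl (subset_univ _))
  have halfu := mul_intervalIntegral_sq_le_of_hasDerivAt h2π (hrect hu.continuousOn)
    (fun θ _ => hdu θ) (hrect hu') Real.continuous_cosh.continuousOn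
    (fun r _ => Real.one_le_cosh r) (left_mem_Icc.2 hm.le)
  have halfw := mul_intervalIntegral_sq_le_of_hasDerivAt h2π (hrect hw.continuousOn)
    (fun θ _ => hdw θ) (hrect hw') Real.continuous_cosh.continuousOn
    (fun r _ => Real.one_le_cosh r) (right_mem_Icc.2 (neg_nonpos.2 hm.le))
  have hu0 : ContinuousOn (u 0) (Icc 0 (2 * Real.pi)) :=
    (hrect hu.continuousOn).comp (continuousOn_const.prodMk continuousOn_id)
      fun θ hθ => ⟨left_mem_Icc.2 hm.le, hθ⟩
  have hw0 : ContinuousOn (w 0) (Icc 0 (2 * Real.pi)) :=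
    (hrect hw.continuousOn).comp (continuousOn_const.prodMk continuousOn_id)
      fun θ hθ => ⟨right_mem_Icc.2 (neg_nonpos.2 hm.le), hθ⟩
  have hjump := sq_intervalIntegral_sub_le h2π hu0 hw0
  have henergy_nonneg {a b : ℝ} (hab : a ≤ b) (G : ℝ → ℝ → ℝ) :
      0 ≤ ∫ r in a..b, ∫ θ in (0:ℝ)..(2 * Real.pi), G r θ ^ 2 * Real.cosh r :=
    integral_nonneg hab fun r _ => integral_nonneg h2π fun θ _ => by positivity
  have hI := add_nonneg (henergy_nonneg hm.le u) (henergy_nonneg (neg_nonpos.2 hm.le) w)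
  have hE := add_nonneg (henergy_nonneg hm.le u') (henergy_nonneg (neg_nonpos.2 hm.le) w')
  simp only [sub_zero, sub_neg_eq_add, zero_add] at halfu halfw hjump
  -- `m λ J² ≤ 8π λ (I + m² E) ≤ 8π (m² λ + 1) (E + λ I)`
  rw [div_mul_eq_mul_div, div_le_iff₀ (by positivity)]
  linear_combination lam * m * hjump + 4 * Real.pi * lam * (halfu + halfw) +
    8 * Real.pi * m ^ 2 * lam ^ 2 * hI + 8 * Real.pi * hE
end
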